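/- If triples (R₁, ρ₁, θ₁) and (R₂, ρ₂, θ₂) with Rᵢ, ρᵢ > 0 and θᵢ ∈ [0, π/4] satisfy R₁^n L_n(ρ₁ z, F_{θ₁}) = R₂^n L_n(ρ₂ z, F_{θ₂}) for all z ∈ ℂ \ {0} and some fixed n ≥ 2, then R₁ = R₂, ρ₁ = ρ₂, and θ₁ = θ₂. -/

import Mathlib

open Matrix Complex Real

noncomputable def S (z : ℂ) (G : Matrix (Fin 2) (Fin 2) ℂ) : Matrix (Fin 2) (Fin 2) ℂ :=
  G * Matrix.diagonal ![z, z⁻¹] * Gᴴ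

noncomputable def L (n : ℕ) (z : ℂ) (G : Matrix (Fin 2) (Fin 2) ℂ) : ℂ :=
  ((S z G) ^ n).trace

noncomputable def Fmat (θ : ℝ) : Matrix (Fin 2) (Fin 2) ℂ :=
  !![(Real.cos θ : ℂ), (Real.sin θ : ℂ); (Real.sin θ : ℂ), (Real.cos θ : ℂ)]

/-!
By Cayley–Hamilton, the traces of the powers of a `2 × 2` matrix depend only on its trace and
determinant. For `S = S z F_θ` these are `z + z⁻¹` and `|det F_θ|² · z z⁻¹`, so `L n z⁻¹ = L n z`,
and `S 1 F_θ = !![1, sin 2θ; sin 2θ, 1]` gives `L n 1 F_θ = (1 + sin 2θ)ⁿ + (1 - sin 2θ)ⁿ`.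

The coefficient of `z⁻ⁿ` is read off at `z = 0`: `zⁿ L n z F_θ` is the trace of the `n`-th power
of `F_θ diag(z², 1) F_θ`, which is continuous in `z` and at `z = 0` is a rank-one projection, of
trace `1`. Multiplying the hypothesis by `zⁿ` and letting `z → 0` gives `(R₁/ρ₁)ⁿ = (R₂/ρ₂)ⁿ`;
the symmetry `z ↔ z⁻¹` turns it into `(R₁ρ₁)ⁿ = (R₂ρ₂)ⁿ`. Hence `R₁ = R₂` and `ρ₁ = ρ₂`, and at
`z = ρ⁻¹` the hypothesis becomes `L n 1 F_{θ₁} = L n 1 F_{θ₂}`; since `t ↦ (1 + t)ⁿ + (1 - t)ⁿ` is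
strictly increasing on `t ≥ 0` for `n ≥ 2`, `θ₁ = θ₂`.
-/

namespace Matrix

variable {R : Type*} [CommRing R]

theorem sq_fin_two_eq_trace_smul_sub_det_smul (A : Matrix (Fin 2) (Fin 2) R) :
    A ^ 2 = A.trace • A - A.det • 1 := by
  ext i j
  fin_cases i <;> fin_cases j <;>
    simp [sq, mul_apply, trace_fin_two, det_fin_two] <;> ring

theorem trace_pow_add_two_fin_two (A : Matrix (Fin 2) (Fin 2) R) (n : ℕ) :
    (A ^ (n + 2)).trace = A.trace * (A ^ (n + 1)).trace - A.det * (A ^ n).trace := by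
  rw [pow_add, sq_fin_two_eq_trace_smul_sub_det_smul, mul_sub, mul_smul_comm, mul_smul_comm,
    mul_one, ← pow_succ, trace_sub, trace_smul, trace_smul, smul_eq_mul, smul_eq_mul]

theorem trace_pow_eq_of_trace_eq_of_det_eq {A B : Matrix (Fin 2) (Fin 2) R}
    (htr : A.trace = B.trace) (hdet : A.det = B.det) (n : ℕ) :
    (A ^ n).trace = (B ^ n).trace := by
  induction n using Nat.twoStepInduction with
  | zero => simp
  | one => simpa using htr
  | more n ih₀ ih₁ =>
    rw [trace_pow_add_two_fin_two, trace_pow_add_two_fin_two, htr, hdet, ih₀, ih₁]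

theorem trace_pow_fin_two_of_one_one (t : R) (n : ℕ) :
    (!![1, t; t, 1] ^ n).trace = (1 + t) ^ n + (1 - t) ^ n := by
  rw [trace_pow_eq_of_trace_eq_of_det_eq (B := diagonal ![1 + t, 1 - t])]
  · simp [diagonal_pow, trace_diagonal, Fin.sum_univ_two]
  · simp [trace_fin_two, trace_diagonal, Fin.sum_univ_two]
  · simp [det_fin_two, det_diagonal, Fin.prod_univ_two]; ring

end Matrix

theorem Fmat_conjTranspose (θ : ℝ) : (Fmat θ)ᴴ = Fmat θ := by
  ext i j
  fin_cases i <;> fin_cases j <;> simp [Fmat, conjTranspose_apply, -ofReal_cos, -ofReal_sin]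

theorem det_S (z : ℂ) (G : Matrix (Fin 2) (Fin 2) ℂ) :
    (S z G).det = G.det * (z * z⁻¹) * star G.det := by
  simp [S, det_conjTranspose]

theorem Fmat_mul_self (θ : ℝ) :
    Fmat θ * Fmat θ = !![1, (Real.sin (2 * θ) : ℂ); (Real.sin (2 * θ) : ℂ), 1] := by
  have h := Complex.sin_sq_add_cos_sq θ
  ext i j
  fin_cases i <;> fin_cases j <;> simp [Fmat, Complex.sin_two_mul] <;>
    [linear_combination h; ring; ring; linear_combination h]

theorem trace_S_Fmat (z : ℂ) (θ : ℝ) : (S z (Fmat θ)).trace = z + z⁻¹ := by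
  rw [S, Fmat_conjTranspose, trace_mul_cycle, Fmat_mul_self]
  simp [trace_fin_two, vecMul_diagonal]

theorem L_inv (n : ℕ) (z : ℂ) (θ : ℝ) : L n z⁻¹ (Fmat θ) = L n z (Fmat θ) :=
  trace_pow_eq_of_trace_eq_of_det_eq (by rw [trace_S_Fmat, trace_S_Fmat, inv_inv, add_comm])
    (by rw [det_S, det_S, inv_inv, mul_comm z⁻¹]) n

theorem S_one_Fmat (θ : ℝ) :
    S 1 (Fmat θ) = !![1, (Real.sin (2 * θ) : ℂ); (Real.sin (2 * θ) : ℂ), 1] := by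
  rw [S, inv_one, show ![(1 : ℂ), 1] = fun _ => 1 from by ext i; fin_cases i <;> rfl, diagonal_one,
    mul_one, Fmat_conjTranspose, Fmat_mul_self]

theorem L_one (n : ℕ) (θ : ℝ) :
    L n 1 (Fmat θ) = (((1 + Real.sin (2 * θ)) ^ n + (1 - Real.sin (2 * θ)) ^ n : ℝ) : ℂ) := by
  rw [L, S_one_Fmat, trace_pow_fin_two_of_one_one]
  simp

noncomputable def scaledS (z : ℂ) (G : Matrix (Fin 2) (Fin 2) ℂ) : Matrix (Fin 2) (Fin 2) ℂ :=
  G * diagonal ![z ^ 2, 1] * Gᴴ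

theorem smul_S {z : ℂ} (hz : z ≠ 0) (G : Matrix (Fin 2) (Fin 2) ℂ) :
    z • S z G = scaledS z G := by
  have : z • diagonal ![z, z⁻¹] = diagonal ![z ^ 2, 1] := by
    rw [← diagonal_smul]; congr 1; ext i; fin_cases i <;> simp [sq, hz]
  rw [S, scaledS, ← this, Matrix.mul_smul, Matrix.smul_mul]

theorem pow_mul_L (n : ℕ) {z : ℂ} (hz : z ≠ 0) (G : Matrix (Fin 2) (Fin 2) ℂ) :
    z ^ n * L n z G = (scaledS z G ^ n).trace := by
  rw [← smul_S hz, smul_pow, trace_smul, L, smul_eq_mul]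

theorem continuous_trace_scaledS_pow (n : ℕ) (G : Matrix (Fin 2) (Fin 2) ℂ) :
    Continuous fun z => (scaledS z G ^ n).trace := by
  unfold scaledS
  fun_prop

theorem scaledS_zero_Fmat (θ : ℝ) :
    scaledS 0 (Fmat θ) = !![(Real.sin θ : ℂ) * Real.sin θ, Real.sin θ * Real.cos θ;
      Real.cos θ * Real.sin θ, Real.cos θ * Real.cos θ] := by
  rw [scaledS, Fmat_conjTranspose, diagonal_vec2, Fmat, mul_fin_two, mul_fin_two]
  simp

theorem isIdempotentElem_scaledS_zero_Fmat (θ : ℝ) : IsIdempotentElem (scaledS 0 (Fmat θ)) := by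
  have h := Complex.sin_sq_add_cos_sq θ
  rw [IsIdempotentElem, scaledS_zero_Fmat, mul_fin_two]
  ext i j
  fin_cases i <;> fin_cases j <;> simp <;>
    [linear_combination Complex.sin θ ^ 2 * h;
     linear_combination Complex.sin θ * Complex.cos θ * h;
     linear_combination Complex.sin θ * Complex.cos θ * h;
     linear_combination Complex.cos θ ^ 2 * h]

theorem trace_scaledS_zero_Fmat_pow {n : ℕ} (hn : n ≠ 0) (θ : ℝ) :
    (scaledS 0 (Fmat θ) ^ n).trace = 1 := by
  rw [(isIdempotentElem_scaledS_zero_Fmat θ).pow_eq hn, scaledS_zero_Fmat, trace_fin_two_of]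
  push_cast
  linear_combination Complex.sin_sq_add_cos_sq θ

theorem div_pow_eq_of_forall_L_eq {n : ℕ} (hn : n ≠ 0) {R₁ R₂ ρ₁ ρ₂ : ℂ} (hρ₁ : ρ₁ ≠ 0)
    (hρ₂ : ρ₂ ≠ 0) {θ₁ θ₂ : ℝ}
    (heq : ∀ z ≠ 0, R₁ ^ n * L n (ρ₁ * z) (Fmat θ₁) = R₂ ^ n * L n (ρ₂ * z) (Fmat θ₂)) :
    (R₁ / ρ₁) ^ n = (R₂ / ρ₂) ^ n := by
  have hscale : ∀ {R ρ : ℂ} {θ : ℝ} {z : ℂ}, ρ ≠ 0 → z ≠ 0 →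
      (R / ρ) ^ n * (scaledS (ρ * z) (Fmat θ) ^ n).trace =
        z ^ n * (R ^ n * L n (ρ * z) (Fmat θ)) := by
    intro R ρ θ z hρ hz
    rw [← pow_mul_L n (mul_ne_zero hρ hz), mul_pow, div_pow]
    field_simp
  have hcont : ∀ (R ρ : ℂ) (θ : ℝ),
      Continuous fun z => (R / ρ) ^ n * (scaledS (ρ * z) (Fmat θ) ^ n).trace := fun R ρ θ =>
    continuous_const.mul ((continuous_trace_scaledS_pow n _).comp (continuous_const_mul ρ))
  have hext := Continuous.ext_on (dense_compl_singleton (0 : ℂ)) (hcont R₁ ρ₁ θ₁) (hcont R₂ ρ₂ θ₂)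
    fun z (hz : z ≠ 0) => by simp only [hscale hρ₁ hz, hscale hρ₂ hz, heq z hz]
  simpa [trace_scaledS_zero_Fmat_pow hn] using congrFun hext 0

theorem strictMonoOn_one_add_pow_add_one_sub_pow {n : ℕ} (hn : 2 ≤ n) :
    StrictMonoOn (fun t : ℝ => (1 + t) ^ n + (1 - t) ^ n) (Set.Ici 0) := by
  refine strictMonoOn_of_deriv_pos (convex_Ici 0) (by fun_prop) fun t ht => ?_
  rw [interior_Ici, Set.mem_Ioi] at ht
  have hlt : (1 - t) ^ (n - 1) < (1 + t) ^ (n - 1) :=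
    calc (1 - t) ^ (n - 1) ≤ |1 - t| ^ (n - 1) := by rw [← abs_pow]; exact le_abs_self _
      _ < (1 + t) ^ (n - 1) :=
        pow_lt_pow_left₀ (abs_sub_lt_iff.2 ⟨by linarith, by linarith⟩) (abs_nonneg _) (by omega)
  have hderiv : HasDerivAt (fun t : ℝ => (1 + t) ^ n + (1 - t) ^ n)
      (n * ((1 + t) ^ (n - 1) - (1 - t) ^ (n - 1))) t :=
    ((((hasDerivAt_id' t).const_add 1).fun_pow n).add
      (((hasDerivAt_id' t).const_sub 1).fun_pow n)).congr_deriv (by ring)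
  rw [hderiv.deriv]
  exact mul_pos (by positivity) (sub_pos.2 hlt)

theorem injOn_L_one {n : ℕ} (hn : 2 ≤ n) :
    Set.InjOn (fun θ => L n 1 (Fmat θ)) (Set.Icc 0 (π / 4)) := by
  have hsin : StrictMonoOn (fun θ : ℝ => Real.sin (2 * θ)) (Set.Icc 0 (π / 4)) :=
    strictMonoOn_sin.comp ((strictMono_mul_left_of_pos (two_pos : (0 : ℝ) < 2)).strictMonoOn _)
      fun θ hθ => ⟨by linarith [hθ.1, pi_pos], by linarith [hθ.2]⟩
  have hsin_nonneg : Set.MapsTo (fun θ : ℝ => Real.sin (2 * θ)) (Set.Icc 0 (π / 4)) (Set.Ici 0) :=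
    fun θ hθ => sin_nonneg_of_nonneg_of_le_pi (by linarith [hθ.1]) (by linarith [hθ.2, pi_pos])
  intro θ₁ hθ₁ θ₂ hθ₂ h
  simp only [L_one, ofReal_inj] at h
  exact ((strictMonoOn_one_add_pow_add_one_sub_pow hn).comp hsin hsin_nonneg).injOn hθ₁ hθ₂ h

theorem forall_L_inv_eq {n : ℕ} {R₁ R₂ ρ₁ ρ₂ : ℂ} {θ₁ θ₂ : ℝ}
    (heq : ∀ z ≠ 0, R₁ ^ n * L n (ρ₁ * z) (Fmat θ₁) = R₂ ^ n * L n (ρ₂ * z) (Fmat θ₂)) :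
    ∀ z ≠ 0, R₁ ^ n * L n (ρ₁⁻¹ * z) (Fmat θ₁) = R₂ ^ n * L n (ρ₂⁻¹ * z) (Fmat θ₂) := by
  intro z hz
  have h := heq z⁻¹ (inv_ne_zero hz)
  rwa [← L_inv n (ρ₁ * z⁻¹), ← L_inv n (ρ₂ * z⁻¹), mul_inv, mul_inv, inv_inv] at h

theorem eq_and_eq_of_mul_eq_of_div_eq {a b c d : ℝ} (ha : 0 < a) (hb : 0 < b) (hc : 0 < c)
    (hd : 0 < d) (hmul : a * b = c * d) (hdiv : a / b = c / d) : a = c ∧ b = d := by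
  have hsq : a ^ 2 = c ^ 2 := by
    calc a ^ 2 = a * b * (a / b) := by field_simp
      _ = c * d * (c / d) := by rw [hmul, hdiv]
      _ = c ^ 2 := by field_simp
  have hac : a = c := (pow_left_inj₀ ha.le hc.le two_ne_zero).1 hsq
  exact ⟨hac, mul_left_cancel₀ ha.ne' (hac ▸ hmul)⟩

theorem eq_of_ofReal_pow_eq {n : ℕ} (hn : n ≠ 0) {x y : ℝ} (hx : 0 ≤ x) (hy : 0 ≤ y)
    (h : (x : ℂ) ^ n = (y : ℂ) ^ n) : x = y :=
  (pow_left_inj₀ hx hy hn).1 (mod_cast h)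

theorem stmt19 (R₁ R₂ ρ₁ ρ₂ : ℝ) (hR₁ : 0 < R₁) (hR₂ : 0 < R₂)
    (hρ₁ : 0 < ρ₁) (hρ₂ : 0 < ρ₂) (θ₁ θ₂ : ℝ)
    (hθ₁ : θ₁ ∈ Set.Icc (0 : ℝ) (Real.pi / 4))
    (hθ₂ : θ₂ ∈ Set.Icc (0 : ℝ) (Real.pi / 4)) (n : ℕ) (hn : 2 ≤ n)
    (heq : ∀ z : ℂ, z ≠ 0 →
      (R₁ : ℂ) ^ n * L n ((ρ₁ : ℂ) * z) (Fmat θ₁) =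
      (R₂ : ℂ) ^ n * L n ((ρ₂ : ℂ) * z) (Fmat θ₂)) :
    R₁ = R₂ ∧ ρ₁ = ρ₂ ∧ θ₁ = θ₂ := by
  have hn0 : n ≠ 0 := by omega
  have hρ₁0 : (ρ₁ : ℂ) ≠ 0 := ofReal_ne_zero.2 hρ₁.ne'
  have hρ₂0 : (ρ₂ : ℂ) ≠ 0 := ofReal_ne_zero.2 hρ₂.ne'
  have hdiv : R₁ / ρ₁ = R₂ / ρ₂ := eq_of_ofReal_pow_eq hn0 (by positivity) (by positivity)
    (by exact_mod_cast div_pow_eq_of_forall_L_eq hn0 hρ₁0 hρ₂0 heq)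
  have hmul : R₁ * ρ₁ = R₂ * ρ₂ := eq_of_ofReal_pow_eq hn0 (by positivity) (by positivity) (by
    simpa only [div_inv_eq_mul, ofReal_mul] using div_pow_eq_of_forall_L_eq hn0
      (inv_ne_zero hρ₁0) (inv_ne_zero hρ₂0) (forall_L_inv_eq heq))
  obtain ⟨rfl, rfl⟩ := eq_and_eq_of_mul_eq_of_div_eq hR₁ hρ₁ hR₂ hρ₂ hmul hdiv
  refine ⟨rfl, rfl, injOn_L_one hn hθ₁ hθ₂ ?_⟩
  have h := heq (ρ₁ : ℂ)⁻¹ (inv_ne_zero hρ₁0)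
  rwa [mul_inv_cancel₀ hρ₁0, mul_right_inj' (pow_ne_zero n (ofReal_ne_zero.2 hR₁.ne'))] at h
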